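/- Let d ≥ 1, Nα ≥ 2, Nβ ≥ 1, N = Nα + Nβ. Let ρ_1,…,ρ_{Nα} be Borel probability measures on ℝ^d with finite first moments, let ŷ_1,…,ŷ_{Nβ} ∈ ℝ^d, and set ρ_{Nα+j} := δ_{ŷ_j} for j = 1,…,Nβ. Assume that for some i ∈ {2,…,Nα} the measure ρ_i is not a Dirac mass. Then the product measure γ := ρ_1 ⊗ ρ_2 ⊗ … ⊗ ρ_N is a minimizer of ∫ c dγ over Π(ρ_1,…,ρ_N), and γ is not induced by a map: there exists no Borel map T : ℝ^d → (ℝ^d)^{N−1} such that γ = (Id, T)_# ρ_1. In particular, the Kantorovich problem admits an optimal plan that is not a Monge solution. -/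

import Mathlib

open MeasureTheory RealInnerProductSpace

noncomputable section

/-- The "starred" vector `y* = (-2 y¹, y², …, y^d)`. -/
def ystar {d : ℕ} (hd : 0 < d) (y : EuclideanSpace ℝ (Fin d)) : EuclideanSpace ℝ (Fin d) :=
  y - (3 * y ⟨0, hd⟩) • EuclideanSpace.single (⟨0, hd⟩ : Fin d) (1 : ℝ)

/-- The cost `c(x_1,…,x_Nα,y_1,…,y_Nβ) = ∑_i ∑_j x_i · y_j*` on `(ℝ^d)^(Nα+Nβ)`. -/
def cost {d : ℕ} (hd : 0 < d) (Nα Nβ : ℕ)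
    (z : Fin (Nα + Nβ) → EuclideanSpace ℝ (Fin d)) : ℝ :=
  ∑ i : Fin Nα, ∑ j : Fin Nβ, ⟪z (Fin.castAdd Nβ i), ystar hd (z (Fin.natAdd Nα j))⟫

/-!
The `y`-marginals are Dirac masses, so on every coupling the cost is a.e. the sum
`∑ᵢ ⟪xᵢ, S⟫` with `S = ∑ⱼ ŷⱼ*`; its integral only depends on the marginals, and every coupling,
in particular the product one, is optimal.

If the product measure were `(Id, T)_# ρ₁`, then the pair of coordinates `(x₁, x_{i₀})` would
have law both `ρ₁ ⊗ ρ_{i₀}` and `(Id, T_{i₀})_# ρ₁`. Testing on `T_{i₀}⁻¹(A) × Aᶜ` gives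
`ρ_{i₀}(A) ρ_{i₀}(Aᶜ) = 0`, so `ρ_{i₀}` is a zero-one measure, hence a Dirac mass on the
standard Borel space `ℝ^d`.
-/

open ProbabilityTheory

namespace MeasureTheory

section Graph

variable {α β : Type*} [MeasurableSpace α] [MeasurableSpace β]
  {μ : Measure α} {ν : Measure β} [IsProbabilityMeasure μ] [IsProbabilityMeasure ν] {g : α → β}

lemma Measure.isZeroOneMeasure_of_prod_eq_map_graph (hg : Measurable g)
    (h : μ.prod ν = μ.map fun x => (x, g x)) : IsZeroOneMeasure ν := by
  have rect : ∀ s t, MeasurableSet s → MeasurableSet t → μ s * ν t = μ (s ∩ g ⁻¹' t) :=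
    fun s t hs ht => by
      rw [← Measure.prod_prod, h, Measure.map_apply (by fun_prop) (hs.prod ht)]
      rfl
  refine ⟨fun A hA => ?_⟩
  have hνA : ν A = μ (g ⁻¹' A) := by simpa using rect Set.univ A .univ hA
  have hprod : ν A * ν Aᶜ = 0 := by
    rw [hνA, rect _ _ (hg hA) hA.compl, Set.preimage_compl, Set.inter_compl_self, measure_empty]
  exact (mul_eq_zero.1 hprod).imp_right (prob_compl_eq_zero_iff hA).1

lemma Measure.exists_eq_dirac_of_prod_eq_map_graph [StandardBorelSpace β] (hg : Measurable g)
    (h : μ.prod ν = μ.map fun x => (x, g x)) : ∃ y, ν = Measure.dirac y :=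
  have := Measure.isZeroOneMeasure_of_prod_eq_map_graph hg h
  IsZeroOneMeasure.exists_eq_dirac

end Graph

lemma Measure.map_pi_eval_prod_eval {ι : Type*} [Fintype ι] {α : ι → Type*}
    [∀ i, MeasurableSpace (α i)] (μ : ∀ i, Measure (α i)) [∀ i, IsProbabilityMeasure (μ i)]
    {i j : ι} (hij : i ≠ j) :
    (Measure.pi μ).map (fun z => (z i, z j)) = (μ i).prod (μ j) := by
  have hindep : IndepFun (fun z : ∀ k, α k => z i) (fun z => z j) (Measure.pi μ) :=
    (iIndepFun_pi (X := fun _ => id) fun _ => aemeasurable_id).indepFun hij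
  rw [(indepFun_iff_map_prod_eq_prod_map_map (measurable_pi_apply i).aemeasurable
    (measurable_pi_apply j).aemeasurable).1 hindep, (measurePreserving_eval μ i).map_eq,
    (measurePreserving_eval μ j).map_eq]

lemma Measure.pi_ne_map_of_ne_dirac {ι X : Type*} [Fintype ι] [MeasurableSpace X]
    [StandardBorelSpace X] (μ : ι → Measure X) [∀ i, IsProbabilityMeasure (μ i)] {i j : ι}
    (hij : i ≠ j) (hj : ∀ x, μ j ≠ Measure.dirac x) {T : X → ι → X} (hT : Measurable T)
    (hTi : ∀ x, T x i = x) : Measure.pi μ ≠ (μ i).map T := by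
  intro hpi
  have hgraph : (μ i).prod (μ j) = (μ i).map fun x => (x, T x j) := by
    rw [← Measure.map_pi_eval_prod_eval μ hij, hpi,
      Measure.map_map (by fun_prop) hT]
    simp only [Function.comp_def, hTi]
  obtain ⟨y, hy⟩ := Measure.exists_eq_dirac_of_prod_eq_map_graph (by fun_prop) hgraph
  exact hj y hy

end MeasureTheory

section Cost

variable {d Nα Nβ : ℕ} (hd : 0 < d) {ρ : Fin (Nα + Nβ) → Measure (EuclideanSpace ℝ (Fin d))}
  {yhat : Fin Nβ → EuclideanSpace ℝ (Fin d)}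
  {γ : Measure (Fin (Nα + Nβ) → EuclideanSpace ℝ (Fin d))}

lemma cost_ae_eq_of_map_eq_dirac
    (hy : ∀ j, γ.map (fun z => z (Fin.natAdd Nα j)) = Measure.dirac (yhat j)) :
    ∀ᵐ z ∂γ, cost hd Nα Nβ z
      = ∑ i : Fin Nα, ⟪z (Fin.castAdd Nβ i), ∑ j, ystar hd (yhat j)⟫ := by
  have hz : ∀ᵐ z ∂γ, ∀ j, z (Fin.natAdd Nα j) = yhat j := by
    refine ae_all_iff.2 fun j =>
      ae_of_ae_map (μ := γ) (p := (· = yhat j)) (measurable_pi_apply _).aemeasurable ?_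
    rw [hy j, ae_dirac_eq]
    exact Filter.eventually_pure.2 rfl
  filter_upwards [hz] with z hz
  simp only [cost, hz, inner_sum]

lemma integral_cost_eq_of_map_eq
    (hmom : ∀ i : Fin Nα,
      Integrable (fun x : EuclideanSpace ℝ (Fin d) => ‖x‖) (ρ (Fin.castAdd Nβ i)))
    (hdirac : ∀ j : Fin Nβ, ρ (Fin.natAdd Nα j) = Measure.dirac (yhat j))
    (hγ : ∀ i, γ.map (fun z => z i) = ρ i) :
    ∫ z, cost hd Nα Nβ z ∂γ
      = ∑ i : Fin Nα, ∫ x, ⟪x, ∑ j, ystar hd (yhat j)⟫ ∂ρ (Fin.castAdd Nβ i) := by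
  have hint : ∀ i : Fin Nα,
      Integrable (fun z => ⟪z (Fin.castAdd Nβ i), ∑ j, ystar hd (yhat j)⟫) γ := fun i =>
    have hx : Integrable id (ρ (Fin.castAdd Nβ i)) :=
      (integrable_norm_iff aestronglyMeasurable_id).1 (hmom i)
    MeasurePreserving.integrable_comp_of_integrable
      (f := fun z : Fin (Nα + Nβ) → _ => z (Fin.castAdd Nβ i)) ⟨measurable_pi_apply _, hγ _⟩
      (hx.inner_const _)
  rw [integral_congr_ae (cost_ae_eq_of_map_eq_dirac hd fun j => (hγ _).trans (hdirac j)),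
    integral_finsetSum _ fun i _ => hint i]
  refine Finset.sum_congr rfl fun i _ => ?_
  rw [← hγ, integral_map (measurable_pi_apply _).aemeasurable (by fun_prop)]

end Cost

theorem stmt_13 {d Nα Nβ : ℕ} (hd : 0 < d) (hNα : 2 ≤ Nα)
    (ρ : Fin (Nα + Nβ) → Measure (EuclideanSpace ℝ (Fin d)))
    [∀ i, IsProbabilityMeasure (ρ i)]
    (hmom : ∀ i : Fin Nα,
      Integrable (fun x : EuclideanSpace ℝ (Fin d) => ‖x‖) (ρ (Fin.castAdd Nβ i)))
    (yhat : Fin Nβ → EuclideanSpace ℝ (Fin d))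
    (hdirac : ∀ j : Fin Nβ, ρ (Fin.natAdd Nα j) = Measure.dirac (yhat j))
    (i₀ : Fin Nα) (hi₀ : i₀ ≠ ⟨0, by omega⟩)
    (hnd : ∀ x : EuclideanSpace ℝ (Fin d), ρ (Fin.castAdd Nβ i₀) ≠ Measure.dirac x) :
    (∀ i, Measure.map (fun z => z i) (Measure.pi ρ) = ρ i) ∧
    (∀ γ' : Measure (Fin (Nα + Nβ) → EuclideanSpace ℝ (Fin d)),
      IsProbabilityMeasure γ' →
      (∀ i, Measure.map (fun z => z i) γ' = ρ i) →
      ∫ z, cost hd Nα Nβ z ∂(Measure.pi ρ) ≤ ∫ z, cost hd Nα Nβ z ∂γ') ∧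
    ¬ ∃ T : EuclideanSpace ℝ (Fin d) → (Fin (Nα + Nβ) → EuclideanSpace ℝ (Fin d)),
        Measurable T ∧ (∀ x, T x ⟨0, by omega⟩ = x) ∧
        Measure.pi ρ = Measure.map T (ρ ⟨0, by omega⟩) := by
  have hmarg : ∀ i, (Measure.pi ρ).map (fun z => z i) = ρ i :=
    fun i => (measurePreserving_eval ρ i).map_eq
  refine ⟨hmarg, fun γ' _ hγ' => ?_, ?_⟩
  · rw [integral_cost_eq_of_map_eq hd hmom hdirac hmarg,
      integral_cost_eq_of_map_eq hd hmom hdirac hγ']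
  · rintro ⟨T, hT, hT0, hTρ⟩
    have hne : (⟨0, by omega⟩ : Fin (Nα + Nβ)) ≠ Fin.castAdd Nβ i₀ :=
      fun h => hi₀ (Fin.ext (congrArg Fin.val h).symm)
    exact Measure.pi_ne_map_of_ne_dirac ρ hne hnd hT hT0 hTρ
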